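/- Let X_L and X_R be disjoint subsets of V, X_t = X_L ∪ X_R, and Y = V \ X_t. Suppose Ψ : F₂^{V\X_L} × F₂^{V\X_R} → F₂ is any function satisfying Ψ(σ_{X_L}(a), σ_{X_R}(b)) = aᵀ·A[X_L, X_R]·b for all a ∈ F₂^{X_L} and b ∈ F₂^{X_R}. Then for every natural number a (the Fourier mode) and every γ ∈ F₂^Y: Σ_{z : X_t → {0,1}, σ_{X_t}(z) = γ} ω^{a·φ_{X_t}(z)} = Σ_{α ∈ F₂^{V\X_L}, β ∈ F₂^{V\X_R}, α|_Y + β|_Y = γ} ( Σ_{u : X_L → {0,1}, σ_{X_L}(u) = α} ω^{a·φ_{X_L}(u)} ) · ( Σ_{v : X_R → {0,1}, σ_{X_R}(v) = β} ω^{a·φ_{X_R}(v)} ) · (−1)^{a·χ(α,β)}, where χ(α,β) ∈ {0,1} ⊆ ℕ is the lift of Ψ(α,β) and ω^{a·φ} means ω raised to a times an integer representative of φ ∈ ZMod r. (This is the join-step invariant of the Fourier-mode dynamic program; the interaction kernel ω^{a·η·χ} equals (−1)^{a·χ} because η = r/2.) -/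

import Mathlib

open Classical

/-- The `F₂`-adjacency matrix of a simple graph. -/
noncomputable def adjMat {V : Type*} [Fintype V] (G : SimpleGraph V) : Matrix V V (ZMod 2) :=
  fun u v => if G.Adj u v then 1 else 0

/-- The boundary signature `σ_X(z) = zᵀ·A[X, V\X]` of an assignment `z ∈ F₂^X`. -/
noncomputable def bsig {V : Type*} [Fintype V] (G : SimpleGraph V) (X : Finset V)
    (z : {v // v ∈ X} → ZMod 2) : {w : V // w ∉ X} → ZMod 2 :=
  fun w => ∑ v : {v // v ∈ X}, z v * adjMat G v.1 w.1

/-- The boundary signature of a 0/1 assignment, identified with an `F₂`-vector. -/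
noncomputable def bsigB {V : Type*} [Fintype V] (G : SimpleGraph V) (X : Finset V)
    (z : {v // v ∈ X} → Bool) : {w : V // w ∉ X} → ZMod 2 :=
  bsig G X (fun v => if z v then 1 else 0)

/-- `m_X(z)`: the number of edges `{u,v}` of `G` with both endpoints in `X` and both
selected by the 0/1 assignment `z`. -/
noncomputable def mX {V : Type*} [Fintype V] (G : SimpleGraph V) (X : Finset V)
    (z : {v // v ∈ X} → Bool) : ℕ :=
  Nat.card {e : Sym2 V // e ∈ G.edgeSet ∧ ∀ v ∈ e, ∃ h : v ∈ X, z ⟨v, h⟩ = true}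

/-- The internal residue `φ_X(z) = Σ_{v∈X} b_v·z_v + η·m_X(z)` in `ZMod r`, with `η = r/2`. -/
noncomputable def phiX {V : Type*} [Fintype V] (G : SimpleGraph V) (r : ℕ)
    (bc : V → ZMod r) (X : Finset V) (z : {v // v ∈ X} → Bool) : ZMod r :=
  (∑ v : {v // v ∈ X}, bc v.1 * (if z v then 1 else 0))
    + ((r / 2 : ℕ) : ZMod r) * (mX G X z : ZMod r)


section Helpers

lemma collapse_step {κ ι M : Type*} [Fintype κ] [DecidableEq κ] [Fintype ι]
    [NonUnitalNonAssocSemiring M] (σ : ι → κ) (g : ι → M) (W : κ → M) :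
    (∑ β : κ, W β * ∑ v : ι, (if σ v = β then g v else 0))
      = ∑ v : ι, W (σ v) * g v := by
  simp_rw [Finset.mul_sum]
  rw [Finset.sum_comm]
  refine Fintype.sum_congr _ _ fun v => ?_
  simp_rw [mul_ite, mul_zero]
  rw [Finset.sum_ite_eq]
  simp

lemma double_collapse {κ₁ κ₂ ι₁ ι₂ M : Type*} [Fintype κ₁] [Fintype κ₂] [Fintype ι₁] [Fintype ι₂]
    [DecidableEq κ₁] [DecidableEq κ₂] [CommRing M]
    (σ₁ : ι₁ → κ₁) (σ₂ : ι₂ → κ₂) (f : ι₁ → M) (g : ι₂ → M)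
    (P : κ₁ → κ₂ → Prop) [∀ a b, Decidable (P a b)] (k : κ₁ → κ₂ → M) :
    (∑ α : κ₁, ∑ β : κ₂, if P α β
        then (∑ u, if σ₁ u = α then f u else 0) * (∑ v, if σ₂ v = β then g v else 0) * k α β
        else 0)
      = ∑ u : ι₁, ∑ v : ι₂, if P (σ₁ u) (σ₂ v) then f u * g v * k (σ₁ u) (σ₂ v) else 0 := by
  have step1 : ∀ α : κ₁,
      (∑ β : κ₂, if P α β
          then (∑ u, if σ₁ u = α then f u else 0) * (∑ v, if σ₂ v = β then g v else 0) * k α β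
          else 0)
        = ∑ v : ι₂, (if P α (σ₂ v)
            then (∑ u, if σ₁ u = α then f u else 0) * k α (σ₂ v) else 0) * g v := by
    intro α
    rw [← collapse_step σ₂ g
      (fun β => if P α β then (∑ u, if σ₁ u = α then f u else 0) * k α β else 0)]
    refine Fintype.sum_congr _ _ fun β => ?_
    split_ifs with h
    · ring
    · simp
  calc (∑ α : κ₁, ∑ β : κ₂, if P α β
        then (∑ u, if σ₁ u = α then f u else 0) * (∑ v, if σ₂ v = β then g v else 0) * k α β
        else 0)
      = ∑ α : κ₁, ∑ v : ι₂, (if P α (σ₂ v)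
            then (∑ u, if σ₁ u = α then f u else 0) * k α (σ₂ v) else 0) * g v := by
        exact Fintype.sum_congr _ _ step1
    _ = ∑ v : ι₂, ∑ α : κ₁, (if P α (σ₂ v)
            then (∑ u, if σ₁ u = α then f u else 0) * k α (σ₂ v) else 0) * g v :=
        Finset.sum_comm
    _ = ∑ v : ι₂, ∑ u : ι₁, (if P (σ₁ u) (σ₂ v) then f u * g v * k (σ₁ u) (σ₂ v) else 0) := by
        refine Fintype.sum_congr _ _ fun v => ?_
        have step2 : ∀ α : κ₁,
            (if P α (σ₂ v) then (∑ u, if σ₁ u = α then f u else 0) * k α (σ₂ v) else 0) * g v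
              = (if P α (σ₂ v) then k α (σ₂ v) * g v else 0)
                  * (∑ u, if σ₁ u = α then f u else 0) := by
          intro α
          split_ifs with h
          · ring
          · simp
        simp_rw [step2]
        rw [collapse_step σ₁ f (fun α => if P α (σ₂ v) then k α (σ₂ v) * g v else 0)]
        refine Fintype.sum_congr _ _ fun u => ?_
        split_ifs with h
        · ring
        · simp
    _ = ∑ u : ι₁, ∑ v : ι₂, (if P (σ₁ u) (σ₂ v) then f u * g v * k (σ₁ u) (σ₂ v) else 0) :=
        Finset.sum_comm

variable {V : Type*} [Fintype V] [DecidableEq V] (G : SimpleGraph V)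

lemma mX_eq_card (X : Finset V) (z : {v // v ∈ X} → Bool) :
    mX G X z = (G.edgeFinset.filter
      (fun e => ∀ v ∈ e, ∃ h : v ∈ X, z ⟨v, h⟩ = true)).card := by
  rw [mX, Nat.card_eq_fintype_card, Fintype.card_subtype]
  congr 1
  ext e
  simp [SimpleGraph.mem_edgeFinset]

lemma mX_union (XL XR : Finset V) (hd : Disjoint XL XR) (z : {v // v ∈ XL ∪ XR} → Bool) :
    mX G (XL ∪ XR) z =
      mX G XL (fun p => z ⟨p.1, Finset.mem_union_left _ p.2⟩)
      + mX G XR (fun p => z ⟨p.1, Finset.mem_union_right _ p.2⟩)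
      + (G.edgeFinset.filter (fun e => ∃ x y, e = s(x, y)
          ∧ (∃ h : x ∈ XL, z ⟨x, Finset.mem_union_left _ h⟩ = true)
          ∧ (∃ h : y ∈ XR, z ⟨y, Finset.mem_union_right _ h⟩ = true))).card := by
  classical
  set sL : V → Prop := fun w => ∃ h : w ∈ XL, z ⟨w, Finset.mem_union_left _ h⟩ = true with hsL
  set sR : V → Prop := fun w => ∃ h : w ∈ XR, z ⟨w, Finset.mem_union_right _ h⟩ = true with hsR
  set PL : Sym2 V → Prop := fun e => ∀ v ∈ e, sL v with hPL
  set PR : Sym2 V → Prop := fun e => ∀ v ∈ e, sR v with hPR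
  set PC : Sym2 V → Prop := fun e => ∃ x y, e = s(x, y) ∧ sL x ∧ sR y with hPC
  have hexcl : ∀ w, sL w → sR w → False := by
    rintro w ⟨h1, _⟩ ⟨h2, _⟩
    exact Finset.disjoint_left.mp hd h1 h2
  have hQ : ∀ w, (∃ h : w ∈ XL ∪ XR, z ⟨w, h⟩ = true) ↔ (sL w ∨ sR w) := by
    intro w
    constructor
    · rintro ⟨h, hz⟩
      rcases Finset.mem_union.mp h with h' | h'
      · exact Or.inl ⟨h', hz⟩
      · exact Or.inr ⟨h', hz⟩
    · rintro (⟨h', hz⟩ | ⟨h', hz⟩)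
      · exact ⟨Finset.mem_union_left _ h', hz⟩
      · exact ⟨Finset.mem_union_right _ h', hz⟩
  have hmem : ∀ (P : V → Prop) (x y : V), (∀ v ∈ s(x, y), P v) ↔ P x ∧ P y := by
    intro P x y
    constructor
    · intro h; exact ⟨h x (by simp), h y (by simp)⟩
    · rintro ⟨h1, h2⟩ v hv
      rcases Sym2.mem_iff.mp hv with rfl | rfl
      · exact h1
      · exact h2
  rw [mX_eq_card, mX_eq_card, mX_eq_card]
  have hkey : ∀ e ∈ G.edgeFinset,
      ((∀ v ∈ e, ∃ h : v ∈ XL ∪ XR, z ⟨v, h⟩ = true) ↔ (PL e ∨ PR e ∨ PC e)) := by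
    intro e _
    induction e using Sym2.ind with
    | _ x y =>
      have hPCxy : PC s(x, y) ↔ ((sL x ∧ sR y) ∨ (sL y ∧ sR x)) := by
        constructor
        · rintro ⟨x', y', he, h1, h2⟩
          rcases Sym2.eq_iff.mp he with ⟨rfl, rfl⟩ | ⟨rfl, rfl⟩
          · exact Or.inl ⟨h1, h2⟩
          · exact Or.inr ⟨h1, h2⟩
        · rintro (⟨h1, h2⟩ | ⟨h1, h2⟩)
          · exact ⟨x, y, rfl, h1, h2⟩
          · exact ⟨y, x, Sym2.eq_swap, h1, h2⟩
      rw [hmem]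
      simp only [hPL, hPR]
      rw [hmem sL x y, hmem sR x y, hPCxy]
      simp only [hQ]
      constructor
      · rintro ⟨hx | hx, hy | hy⟩
        · exact Or.inl ⟨hx, hy⟩
        · exact Or.inr (Or.inr (Or.inl ⟨hx, hy⟩))
        · exact Or.inr (Or.inr (Or.inr ⟨hy, hx⟩))
        · exact Or.inr (Or.inl ⟨hx, hy⟩)
      · rintro (⟨hx, hy⟩ | ⟨hx, hy⟩ | ⟨hx, hy⟩ | ⟨hx, hy⟩)
        · exact ⟨Or.inl hx, Or.inl hy⟩
        · exact ⟨Or.inr hx, Or.inr hy⟩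
        · exact ⟨Or.inl hx, Or.inr hy⟩
        · exact ⟨Or.inr hy, Or.inl hx⟩
  have hdLR : ∀ e, PL e → PR e → False := by
    intro e
    induction e using Sym2.ind with
    | _ x y =>
      intro h1 h2
      exact hexcl x ((hmem sL x y).mp h1).1 ((hmem sR x y).mp h2).1
  have hdLC : ∀ e, PL e → PC e → False := by
    rintro e h1 ⟨x, y, rfl, _, hy⟩
    exact hexcl y (h1 y (by simp)) hy
  have hdRC : ∀ e, PR e → PC e → False := by
    rintro e h1 ⟨x, y, rfl, hx, _⟩
    exact hexcl x hx (h1 x (by simp))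
  rw [Finset.filter_congr hkey, Finset.filter_or, Finset.filter_or,
    Finset.card_union_of_disjoint, Finset.card_union_of_disjoint, add_assoc]
  · rw [Finset.disjoint_left]
    intro e he1 he2
    rw [Finset.mem_filter] at he1 he2
    exact absurd he2.2 (hdRC e he1.2 ·)
  · rw [Finset.disjoint_left]
    intro e he1 he2
    rw [Finset.mem_filter] at he1
    rcases Finset.mem_union.mp he2 with he2 | he2
    · exact hdLR e he1.2 ((Finset.mem_filter.mp he2).2)
    · exact hdLC e he1.2 ((Finset.mem_filter.mp he2).2)

lemma cross_card (XL XR : Finset V) (hd : Disjoint XL XR)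
    (u : {v // v ∈ XL} → Bool) (w : {v // v ∈ XR} → Bool) :
    (G.edgeFinset.filter (fun e => ∃ x y, e = s(x, y)
        ∧ (∃ h : x ∈ XL, u ⟨x, h⟩ = true) ∧ (∃ h : y ∈ XR, w ⟨y, h⟩ = true))).card
    = (Finset.univ.filter (fun p : {v // v ∈ XL} × {v // v ∈ XR} =>
        u p.1 = true ∧ w p.2 = true ∧ G.Adj p.1.1 p.2.1)).card := by
  classical
  symm
  apply Finset.card_bij (fun (p : {v // v ∈ XL} × {v // v ∈ XR}) _ => s(p.1.1, p.2.1))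
  · rintro ⟨p, q⟩ hp
    rw [Finset.mem_filter] at hp
    obtain ⟨-, h1, h2, h3⟩ := hp
    rw [Finset.mem_filter, SimpleGraph.mem_edgeFinset, SimpleGraph.mem_edgeSet]
    exact ⟨h3, p.1, q.1, rfl, ⟨p.2, by simpa using h1⟩, ⟨q.2, by simpa using h2⟩⟩
  · rintro ⟨p, q⟩ hp ⟨p', q'⟩ hp' heq
    rcases Sym2.eq_iff.mp heq with ⟨h1, h2⟩ | ⟨h1, h2⟩
    · exact Prod.ext (Subtype.ext h1) (Subtype.ext h2)
    · exact absurd p.2 (by rw [h1]; exact Finset.disjoint_right.mp hd q'.2)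
  · intro e he
    rw [Finset.mem_filter] at he
    obtain ⟨he1, x, y, rfl, ⟨hx, hux⟩, ⟨hy, hwy⟩⟩ := he
    refine ⟨(⟨x, hx⟩, ⟨y, hy⟩), ?_, rfl⟩
    rw [Finset.mem_filter]
    exact ⟨Finset.mem_univ _, hux, hwy, (SimpleGraph.mem_edgeSet G).mp (SimpleGraph.mem_edgeFinset.mp he1)⟩

lemma cross_sum (XL XR : Finset V) (u : {v // v ∈ XL} → Bool) (w : {v // v ∈ XR} → Bool) :
    (∑ p : {v // v ∈ XL}, ∑ q : {v // v ∈ XR},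
        (if u p then (1 : ZMod 2) else 0) * adjMat G p.1 q.1 * (if w q then 1 else 0))
    = ((Finset.univ.filter (fun p : {v // v ∈ XL} × {v // v ∈ XR} =>
        u p.1 = true ∧ w p.2 = true ∧ G.Adj p.1.1 p.2.1)).card : ZMod 2) := by
  classical
  rw [← Finset.sum_boole, Fintype.sum_prod_type]
  apply Fintype.sum_congr
  intro p
  apply Fintype.sum_congr
  intro q
  by_cases h1 : u p <;> by_cases h2 : w q <;> by_cases h3 : G.Adj p.1 q.1 <;>
    simp [adjMat, h1, h2, h3]

lemma sum_subtype_split {M : Type*} [AddCommMonoid M] (XL XR : Finset V) (hd : Disjoint XL XR)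
    (f : V → M) :
    ∑ v : {v // v ∈ XL ∪ XR}, f v.1
      = (∑ v : {v // v ∈ XL}, f v.1) + ∑ v : {v // v ∈ XR}, f v.1 := by
  rw [Finset.sum_coe_sort, Finset.sum_coe_sort, Finset.sum_coe_sort, Finset.sum_union hd]

lemma pow_mod_r {ζ : ℂ} {r : ℕ} (hζ : ζ ^ r = 1) (n : ℕ) : ζ ^ (n % r) = ζ ^ n := by
  conv_rhs => rw [← Nat.mod_add_div n r, pow_add, pow_mul, hζ, one_pow, mul_one]

lemma pow_val_add {ζ : ℂ} {r : ℕ} [NeZero r] (hζ : ζ ^ r = 1) (x y : ZMod r) :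
    ζ ^ (x + y).val = ζ ^ x.val * ζ ^ y.val := by
  rw [ZMod.val_add, pow_mod_r hζ, pow_add]

lemma zeta_pow_r (r : ℕ) [NeZero r] : Complex.exp (2 * Real.pi * Complex.I / r) ^ r = 1 := by
  rw [← Complex.exp_nat_mul]
  have hne : (r : ℂ) ≠ 0 := Nat.cast_ne_zero.mpr (NeZero.ne r)
  have : (r : ℂ) * (2 * Real.pi * Complex.I / r) = 2 * Real.pi * Complex.I := by
    field_simp
  rw [this, Complex.exp_two_pi_mul_I]

lemma zeta_pow_half (r : ℕ) [NeZero r] (hre : Even r) (hr : 2 ≤ r) :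
    Complex.exp (2 * Real.pi * Complex.I / r) ^ (r / 2) = -1 := by
  rw [← Complex.exp_nat_mul]
  have hne : (r : ℂ) ≠ 0 := Nat.cast_ne_zero.mpr (NeZero.ne r)
  have h2 : ((r / 2 : ℕ) : ℂ) * (2 * Real.pi * Complex.I / r) = Real.pi * Complex.I := by
    obtain ⟨k, hk⟩ := hre
    have hk' : r / 2 = k := by omega
    have hkc : (r : ℂ) = 2 * k := by rw [hk]; push_cast; ring
    have hkne : (k : ℂ) ≠ 0 := by
      rw [hkc] at hne; intro h; apply hne; rw [h, mul_zero]
    rw [hk', hkc]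
    field_simp
  rw [h2, Complex.exp_pi_mul_I]

lemma sum_split_bool {M : Type*} [AddCommMonoid M] (XL XR : Finset V) (hd : Disjoint XL XR)
    (z : {v // v ∈ XL ∪ XR} → Bool) (g : V → Bool → M) :
    ∑ v : {v // v ∈ XL ∪ XR}, g v.1 (z v)
      = (∑ v : {v // v ∈ XL}, g v.1 (z ⟨v.1, Finset.mem_union_left _ v.2⟩))
        + ∑ v : {v // v ∈ XR}, g v.1 (z ⟨v.1, Finset.mem_union_right _ v.2⟩) := by
  classical
  set ze : V → Bool := fun v => if h : v ∈ XL ∪ XR then z ⟨v, h⟩ else false with hze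
  have e0 : ∑ v : {v // v ∈ XL ∪ XR}, g v.1 (z v)
      = ∑ v : {v // v ∈ XL ∪ XR}, (fun x => g x (ze x)) v.1 :=
    Fintype.sum_congr _ _ fun v => by simp only [hze]; rw [dif_pos v.2]
  have eL : ∑ v : {v // v ∈ XL}, (fun x => g x (ze x)) v.1
      = ∑ v : {v // v ∈ XL}, g v.1 (z ⟨v.1, Finset.mem_union_left _ v.2⟩) :=
    Fintype.sum_congr _ _ fun v => by simp only [hze]; rw [dif_pos (Finset.mem_union_left XR v.2)]
  have eR : ∑ v : {v // v ∈ XR}, (fun x => g x (ze x)) v.1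
      = ∑ v : {v // v ∈ XR}, g v.1 (z ⟨v.1, Finset.mem_union_right _ v.2⟩) :=
    Fintype.sum_congr _ _ fun v => by simp only [hze]; rw [dif_pos (Finset.mem_union_right XL v.2)]
  rw [e0, sum_subtype_split XL XR hd (fun x => g x (ze x)), eL, eR]

lemma bsigB_union (XL XR : Finset V) (hd : Disjoint XL XR) (z : {v // v ∈ XL ∪ XR} → Bool)
    (w : {w : V // w ∉ XL ∪ XR}) :
    bsigB G (XL ∪ XR) z w
      = bsigB G XL (fun p => z ⟨p.1, Finset.mem_union_left _ p.2⟩)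
          ⟨w.1, fun h => w.2 (Finset.mem_union_left XR h)⟩
        + bsigB G XR (fun p => z ⟨p.1, Finset.mem_union_right _ p.2⟩)
          ⟨w.1, fun h => w.2 (Finset.mem_union_right XL h)⟩ := by
  unfold bsigB bsig
  exact sum_split_bool XL XR hd z (fun x b => (if b then 1 else 0) * adjMat G x w.1)

lemma phiX_union (r : ℕ) (bc : V → ZMod r) (XL XR : Finset V) (hd : Disjoint XL XR)
    (z : {v // v ∈ XL ∪ XR} → Bool) :
    phiX G r bc (XL ∪ XR) z
      = phiX G r bc XL (fun p => z ⟨p.1, Finset.mem_union_left _ p.2⟩)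
        + phiX G r bc XR (fun p => z ⟨p.1, Finset.mem_union_right _ p.2⟩)
        + ((r / 2 : ℕ) : ZMod r) * (((G.edgeFinset.filter (fun e => ∃ x y, e = s(x, y)
            ∧ (∃ h : x ∈ XL, z ⟨x, Finset.mem_union_left _ h⟩ = true)
            ∧ (∃ h : y ∈ XR, z ⟨y, Finset.mem_union_right _ h⟩ = true))).card : ℕ) : ZMod r) := by
  unfold phiX
  rw [mX_union G XL XR hd z,
    sum_split_bool XL XR hd z (fun x b => bc x * (if b then 1 else 0))]
  push_cast
  ring

lemma kernel_eq (r : ℕ) [NeZero r] (hr : 2 ≤ r) (hre : Even r) (a C : ℕ) :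
    Complex.exp (2 * Real.pi * Complex.I / r) ^ (a * (((r / 2 : ℕ) : ZMod r) * ((C : ℕ) : ZMod r)).val)
      = (-1 : ℂ) ^ (a * ((C : ZMod 2)).val) := by
  have hdvd : 2 ∣ r := hre.two_dvd
  have hmul : r / 2 * 2 = r := Nat.div_mul_cancel hdvd
  rcases Nat.even_or_odd C with ⟨k, hk⟩ | ⟨k, hk⟩
  · have h1 : ((r / 2 : ℕ) : ZMod r) * ((C : ℕ) : ZMod r) = 0 := by
      rw [← Nat.cast_mul]
      have : r / 2 * C = r * k := by
        rw [hk]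
        calc r / 2 * (k + k) = (r / 2 * 2) * k := by ring
          _ = r * k := by rw [hmul]
      rw [this, Nat.cast_mul, ZMod.natCast_self, zero_mul]
    have h2 : (C : ZMod 2) = 0 := by
      rw [hk, Nat.cast_add, CharTwo.add_self_eq_zero]
    rw [h1, h2, ZMod.val_zero, mul_zero, pow_zero, ZMod.val_zero, mul_zero, pow_zero]
  · have h1 : ((r / 2 : ℕ) : ZMod r) * ((C : ℕ) : ZMod r) = ((r / 2 : ℕ) : ZMod r) := by
      rw [← Nat.cast_mul]
      have : r / 2 * C = r * k + r / 2 := by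
        rw [hk]
        calc r / 2 * (2 * k + 1) = (r / 2 * 2) * k + r / 2 := by ring
          _ = r * k + r / 2 := by rw [hmul]
      rw [this, Nat.cast_add, Nat.cast_mul, ZMod.natCast_self, zero_mul, zero_add]
    have h2 : (C : ZMod 2) = 1 := by
      rw [hk]
      push_cast
      rw [show ((2 : ZMod 2)) = 0 from rfl, zero_mul, zero_add]
    have hlt : r / 2 < r := Nat.div_lt_self (by omega) one_lt_two
    rw [h1, h2, ZMod.val_cast_of_lt hlt, ZMod.val_one, mul_one, pow_mul',
      zeta_pow_half r hre hr]

end Helpers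

/-- the join-step invariant of the Fourier-mode dynamic program.  For each
Fourier mode `a` and parent signature `γ`, the mode-`a` table entry at the join node is
the sum over compatible child signatures of the product of the child table entries times
the interaction kernel `(−1)^{a·χ(α,β)}` (which equals `ω^{a·η·χ}` since `η = r/2`). -/
theorem fourier_join {V : Type*} [Fintype V] [DecidableEq V]
    (G : SimpleGraph V) (r : ℕ) [NeZero r] (hr : 2 ≤ r) (hre : Even r)
    (bc : V → ZMod r) (XL XR : Finset V) (hdisj : Disjoint XL XR)
    (Ψ : ({w : V // w ∉ XL} → ZMod 2) → ({w : V // w ∉ XR} → ZMod 2) → ZMod 2)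
    (hΨ : ∀ (a : {v // v ∈ XL} → ZMod 2) (b : {v // v ∈ XR} → ZMod 2),
      Ψ (bsig G XL a) (bsig G XR b)
        = ∑ u : {v // v ∈ XL}, ∑ v : {v // v ∈ XR}, a u * adjMat G u.1 v.1 * b v)
    (γ : {w : V // w ∉ XL ∪ XR} → ZMod 2) (a : ℕ) :
    (∑ z : {v // v ∈ XL ∪ XR} → Bool,
        if bsigB G (XL ∪ XR) z = γ
        then Complex.exp (2 * Real.pi * Complex.I / r) ^ (a * (phiX G r bc (XL ∪ XR) z).val)
        else 0)
      = ∑ α : {w : V // w ∉ XL} → ZMod 2, ∑ β : {w : V // w ∉ XR} → ZMod 2,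
          if (∀ w : {w : V // w ∉ XL ∪ XR},
                α ⟨w.1, fun h => w.2 (Finset.mem_union_left XR h)⟩
                  + β ⟨w.1, fun h => w.2 (Finset.mem_union_right XL h)⟩ = γ w)
          then (∑ u : {v // v ∈ XL} → Bool,
                  if bsigB G XL u = α
                  then Complex.exp (2 * Real.pi * Complex.I / r) ^ (a * (phiX G r bc XL u).val)
                  else 0)
              * (∑ v : {v // v ∈ XR} → Bool,
                  if bsigB G XR v = β
                  then Complex.exp (2 * Real.pi * Complex.I / r) ^ (a * (phiX G r bc XR v).val)
                  else 0)
              * (-1 : ℂ) ^ (a * (Ψ α β).val)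
          else 0 := by
  classical
  set ζ : ℂ := Complex.exp (2 * Real.pi * Complex.I / r) with hζdef
  have hζr : ζ ^ r = 1 := zeta_pow_r r
  rw [double_collapse (fun u => bsigB G XL u) (fun v => bsigB G XR v)
      (fun u => ζ ^ (a * (phiX G r bc XL u).val))
      (fun v => ζ ^ (a * (phiX G r bc XR v).val))
      (fun α β => ∀ w : {w : V // w ∉ XL ∪ XR},
        α ⟨w.1, fun h => w.2 (Finset.mem_union_left XR h)⟩
          + β ⟨w.1, fun h => w.2 (Finset.mem_union_right XL h)⟩ = γ w)
      (fun α β => (-1 : ℂ) ^ (a * (Ψ α β).val))]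
  let E : ({v // v ∈ XL ∪ XR} → Bool) ≃ (({v // v ∈ XL} → Bool) × ({v // v ∈ XR} → Bool)) :=
  { toFun := fun z => (fun p => z ⟨p.1, Finset.mem_union_left _ p.2⟩,
      fun p => z ⟨p.1, Finset.mem_union_right _ p.2⟩)
    invFun := fun p w => if h : w.1 ∈ XL then p.1 ⟨w.1, h⟩ else
      p.2 ⟨w.1, (Finset.mem_union.mp w.2).resolve_left h⟩
    left_inv := fun z => by
      funext w
      dsimp only
      split_ifs with h
      · rfl
      · rfl
    right_inv := fun p => by
      refine Prod.ext ?_ ?_ <;> funext q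
      · dsimp only
        rw [dif_pos q.2]
      · dsimp only
        rw [dif_neg (Finset.disjoint_right.mp hdisj q.2)] }
  rw [← Equiv.sum_comp E.symm (fun z => if bsigB G (XL ∪ XR) z = γ
      then ζ ^ (a * (phiX G r bc (XL ∪ XR) z).val) else 0), Fintype.sum_prod_type]
  refine Fintype.sum_congr _ _ fun u => Fintype.sum_congr _ _ fun v => ?_
  set z : {v // v ∈ XL ∪ XR} → Bool := E.symm (u, v) with hzdef
  have hz : E z = (u, v) := E.apply_symm_apply _
  have hu : (fun p : {v // v ∈ XL} => z ⟨p.1, Finset.mem_union_left _ p.2⟩) = u :=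
    congrArg Prod.fst hz
  have hv : (fun p : {v // v ∈ XR} => z ⟨p.1, Finset.mem_union_right _ p.2⟩) = v :=
    congrArg Prod.snd hz
  rw [← hu, ← hv]
  have hcond : (bsigB G (XL ∪ XR) z = γ) ↔
      (∀ w : {w : V // w ∉ XL ∪ XR},
        bsigB G XL (fun p => z ⟨p.1, Finset.mem_union_left _ p.2⟩)
            ⟨w.1, fun h => w.2 (Finset.mem_union_left XR h)⟩
          + bsigB G XR (fun p => z ⟨p.1, Finset.mem_union_right _ p.2⟩)
            ⟨w.1, fun h => w.2 (Finset.mem_union_right XL h)⟩ = γ w) := by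
    rw [funext_iff]
    exact forall_congr' fun w => by rw [bsigB_union G XL XR hdisj z w]
  by_cases h : bsigB G (XL ∪ XR) z = γ
  · rw [if_pos h, if_pos (hcond.mp h)]
    set C : ℕ := (G.edgeFinset.filter (fun e => ∃ x y, e = s(x, y)
        ∧ (∃ h : x ∈ XL, z ⟨x, Finset.mem_union_left _ h⟩ = true)
        ∧ (∃ h : y ∈ XR, z ⟨y, Finset.mem_union_right _ h⟩ = true))).card with hCdef
    have hΨv : Ψ (bsigB G XL (fun p => z ⟨p.1, Finset.mem_union_left _ p.2⟩))
        (bsigB G XR (fun p => z ⟨p.1, Finset.mem_union_right _ p.2⟩)) = ((C : ℕ) : ZMod 2) := by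
      unfold bsigB
      rw [hΨ, cross_sum G XL XR (fun p => z ⟨p.1, Finset.mem_union_left _ p.2⟩)
        (fun p => z ⟨p.1, Finset.mem_union_right _ p.2⟩),
        ← cross_card G XL XR hdisj (fun p => z ⟨p.1, Finset.mem_union_left _ p.2⟩)
        (fun p => z ⟨p.1, Finset.mem_union_right _ p.2⟩)]
    have hξ : (ζ ^ a) ^ r = 1 := by rw [← pow_mul, mul_comm, pow_mul, hζr, one_pow]
    rw [phiX_union G r bc XL XR hdisj z, ← hCdef, pow_mul, pow_val_add hξ, pow_val_add hξ,
      ← pow_mul, ← pow_mul, ← pow_mul, hΨv, kernel_eq r hr hre a C]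
  · rw [if_neg h, if_neg (fun hc => h (hcond.mpr hc))]
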